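/- Let c < d be real numbers and f ∈ L¹[c,d]. Then ∫_c^d e^{iρ(d−t)} f(t) dt = o(e^{|Im ρ|(d−c)}) as the complex number ρ → ∞, i.e., for every ε > 0 there exists R > 0 such that |ρ| > R implies |∫_c^d e^{iρ(d−t)} f(t) dt| ≤ ε e^{|Im ρ|(d−c)}. -/

import Mathlib

/-!
Integrating by parts once, `iρ ∫ e^{iρ(d-t)} g(t) dt` equals boundary terms plus
`∫ e^{iρ(d-t)} g'(t) dt`, all bounded by `e^{|Im ρ|(d-c)}` times a constant depending only on `g`;
this proves the claim for `C¹` functions. Since `f ↦ ∫ e^{iρ(d-t)} f(t) dt` has norm at most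
`e^{|Im ρ|(d-c)}` on `L¹[c,d]`, the claim passes to `L¹` limits, and smooth functions are dense
in `L¹`.
-/

open MeasureTheory Complex Set
open scoped ContDiff

theorem MeasureTheory.Integrable.exists_contDiff_integral_norm_sub_le
    {E F : Type*} [NormedAddCommGroup E] [NormedSpace ℝ E] [FiniteDimensional ℝ E]
    [MeasurableSpace E] [BorelSpace E] [NormedAddCommGroup F] [NormedSpace ℝ F]
    {μ : Measure E} [IsFiniteMeasureOnCompacts μ] {f : E → F} (hf : Integrable f μ)
    {ε : ℝ} (hε : 0 < ε) :
    ∃ g : E → F, ContDiff ℝ ∞ g ∧ HasCompactSupport g ∧ ∫ x, ‖f x - g x‖ ∂μ ≤ ε := by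
  obtain ⟨g, hg_supp, hg_smooth, hfg⟩ :=
    (memLp_one_iff_integrable.2 hf).exist_eLpNorm_sub_le ENNReal.one_ne_top le_rfl hε
  refine ⟨g, hg_smooth, hg_supp, ?_⟩
  have hmeas : AEStronglyMeasurable (f - g) μ :=
    hf.aestronglyMeasurable.sub hg_smooth.continuous.aestronglyMeasurable
  rw [eLpNorm_one_eq_lintegral_enorm] at hfg
  exact (integral_norm_eq_lintegral_enorm hmeas).trans_le
    (ENNReal.toReal_le_of_le_ofReal hε.le hfg)

section ExpKernel

variable {c d : ℝ} (ρ : ℂ)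

theorem norm_cexp_I_mul_sub_le {t : ℝ} (hct : c ≤ t) (htd : t ≤ d) :
    ‖cexp (I * ρ * (d - t))‖ ≤ Real.exp (|ρ.im| * (d - c)) := by
  have hre : (I * ρ * ((d : ℂ) - t)).re = -ρ.im * (d - t) := by simp
  rw [norm_exp, hre, Real.exp_le_exp]
  calc -ρ.im * (d - t) ≤ |ρ.im| * (d - t) :=
        mul_le_mul_of_nonneg_right (neg_le_abs _) (by linarith)
    _ ≤ |ρ.im| * (d - c) := by gcongr

theorem norm_integral_cexp_I_mul_sub_mul_le (hcd : c ≤ d) {f : ℝ → ℂ}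
    (hf : IntervalIntegrable f volume c d) :
    ‖∫ t in c..d, cexp (I * ρ * (d - t)) * f t‖ ≤
      Real.exp (|ρ.im| * (d - c)) * ∫ t in c..d, ‖f t‖ := by
  rw [← intervalIntegral.integral_const_mul]
  refine intervalIntegral.norm_integral_le_of_norm_le hcd (ae_of_all _ fun t ht ↦ ?_)
    (hf.norm.const_mul _)
  rw [norm_mul]
  gcongr
  exact norm_cexp_I_mul_sub_le ρ ht.1.le ht.2

theorem hasDerivAt_cexp_I_mul_sub (t : ℝ) :
    HasDerivAt (fun s : ℝ ↦ cexp (I * ρ * (d - s))) (-(I * ρ) * cexp (I * ρ * (d - t))) t := by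
  have h := (((hasDerivAt_id t).ofReal_comp).const_sub (d : ℂ)).const_mul (I * ρ)
  simp only [mul_neg] at h
  simpa [mul_comm] using h.cexp

variable {g g' : ℝ → ℂ}

theorem I_mul_mul_integral_cexp_I_mul_sub_mul (hg : ∀ t ∈ uIcc c d, HasDerivAt g (g' t) t)
    (hg' : IntervalIntegrable g' volume c d) :
    I * ρ * ∫ t in c..d, cexp (I * ρ * (d - t)) * g t =
      (∫ t in c..d, cexp (I * ρ * (d - t)) * g' t) - g d + cexp (I * ρ * (d - c)) * g c := by
  have hK : Continuous fun s : ℝ ↦ cexp (I * ρ * (d - s)) := by fun_prop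
  have hparts := intervalIntegral.integral_mul_deriv_eq_deriv_mul
    (fun t _ ↦ hasDerivAt_cexp_I_mul_sub ρ t) hg
    ((continuous_const.mul hK).intervalIntegrable c d) hg'
  have hconst : ∫ t in c..d, -(I * ρ) * cexp (I * ρ * (d - t)) * g t =
      -(I * ρ) * ∫ t in c..d, cexp (I * ρ * (d - t)) * g t := by
    simp only [mul_assoc, intervalIntegral.integral_const_mul]
  rw [hconst, sub_self, mul_zero, Complex.exp_zero, one_mul] at hparts
  linear_combination -hparts

theorem norm_mul_norm_integral_cexp_I_mul_sub_mul_le (hg : ∀ t ∈ uIcc c d, HasDerivAt g (g' t) t)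
    (hg' : IntervalIntegrable g' volume c d)
    (hcd : c ≤ d) :
    ‖ρ‖ * ‖∫ t in c..d, cexp (I * ρ * (d - t)) * g t‖ ≤
      Real.exp (|ρ.im| * (d - c)) * (‖g c‖ + ‖g d‖ + ∫ t in c..d, ‖g' t‖) := by
  set E := Real.exp (|ρ.im| * (d - c))
  have hE : 1 ≤ E := Real.one_le_exp (by have := abs_nonneg ρ.im; nlinarith)
  have hKc : ‖cexp (I * ρ * (d - c))‖ ≤ E := norm_cexp_I_mul_sub_le ρ le_rfl hcd
  have hint := norm_integral_cexp_I_mul_sub_mul_le ρ hcd hg'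
  have hgd : ‖g d‖ ≤ E * ‖g d‖ := le_mul_of_one_le_left (norm_nonneg _) hE
  calc ‖ρ‖ * ‖∫ t in c..d, cexp (I * ρ * (d - t)) * g t‖
      = ‖(∫ t in c..d, cexp (I * ρ * (d - t)) * g' t) - g d + cexp (I * ρ * (d - c)) * g c‖ := by
        rw [← I_mul_mul_integral_cexp_I_mul_sub_mul ρ hg hg', norm_mul, norm_mul, norm_I, one_mul]
    _ ≤ ‖∫ t in c..d, cexp (I * ρ * (d - t)) * g' t‖ + ‖g d‖
          + ‖cexp (I * ρ * (d - c))‖ * ‖g c‖ := by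
        rw [← norm_mul]; exact (norm_add_le _ _).trans (by gcongr; exact norm_sub_le _ _)
    _ ≤ E * (∫ t in c..d, ‖g' t‖) + E * ‖g d‖ + E * ‖g c‖ := by gcongr
    _ = E * (‖g c‖ + ‖g d‖ + ∫ t in c..d, ‖g' t‖) := by ring

theorem riemann_lebesgue_right_of_hasDerivAt (hg : ∀ t ∈ uIcc c d, HasDerivAt g (g' t) t)
    (hg' : IntervalIntegrable g' volume c d)
    (hcd : c ≤ d) :
    ∀ ε > 0, ∃ R > 0, ∀ ρ : ℂ, R < ‖ρ‖ →
      ‖∫ t in c..d, cexp (I * ρ * (d - t)) * g t‖ ≤ ε * Real.exp (|ρ.im| * (d - c)) := by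
  intro ε hε
  set B := ‖g c‖ + ‖g d‖ + ∫ t in c..d, ‖g' t‖
  have hB : 0 ≤ B := by
    have := intervalIntegral.integral_nonneg (μ := volume) hcd fun t _ ↦ norm_nonneg (g' t)
    positivity
  refine ⟨B / ε + 1, by positivity, fun ρ hρ ↦ ?_⟩
  have hρ_pos : 0 < ‖ρ‖ := by linarith [div_nonneg hB hε.le]
  have hBρ : B ≤ ε * ‖ρ‖ := by
    have := (div_lt_iff₀' hε).1 (by linarith : B / ε < ‖ρ‖); linarith
  refine le_of_mul_le_mul_left ?_ hρ_pos
  calc ‖ρ‖ * ‖∫ t in c..d, cexp (I * ρ * (d - t)) * g t‖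
      ≤ Real.exp (|ρ.im| * (d - c)) * B :=
        norm_mul_norm_integral_cexp_I_mul_sub_mul_le ρ hg hg' hcd
    _ ≤ Real.exp (|ρ.im| * (d - c)) * (ε * ‖ρ‖) := by gcongr
    _ = ‖ρ‖ * (ε * Real.exp (|ρ.im| * (d - c))) := by ring

end ExpKernel

theorem riemann_lebesgue_right (c d : ℝ) (hcd : c < d) (f : ℝ → ℂ)
    (hf : IntervalIntegrable f volume c d) :
    ∀ ε > 0, ∃ R > 0, ∀ ρ : ℂ, R < ‖ρ‖ →
      ‖∫ t in c..d, Complex.exp (Complex.I * ρ * ((d : ℂ) - t)) * f t‖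
        ≤ ε * Real.exp (|ρ.im| * (d - c)) := by
  intro ε hε
  obtain ⟨g, hg_smooth, -, hfg⟩ := hf.1.exists_contDiff_integral_norm_sub_le (half_pos hε)
  have hg_int : IntervalIntegrable g volume c d := hg_smooth.continuous.intervalIntegrable c d
  obtain ⟨R, hR, hRg⟩ := riemann_lebesgue_right_of_hasDerivAt
    (fun t _ ↦ (hg_smooth.differentiable (by simp) t).hasDerivAt)
    ((hg_smooth.continuous_deriv (by simp)).intervalIntegrable c d) hcd.le (ε / 2) (half_pos hε)
  have hfg_int : IntervalIntegrable (fun t ↦ f t - g t) volume c d := hf.sub hg_int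
  rw [← intervalIntegral.integral_of_le hcd.le] at hfg
  refine ⟨R, hR, fun ρ hρ ↦ ?_⟩
  have hsplit : (∫ t in c..d, cexp (I * ρ * (d - t)) * f t) =
      (∫ t in c..d, cexp (I * ρ * (d - t)) * (f t - g t)) +
        ∫ t in c..d, cexp (I * ρ * (d - t)) * g t := by
    rw [← intervalIntegral.integral_add (hfg_int.continuousOn_mul (by fun_prop))
      (hg_int.continuousOn_mul (by fun_prop))]
    simp only [mul_sub, sub_add_cancel]
  calc ‖∫ t in c..d, cexp (I * ρ * (d - t)) * f t‖
      ≤ ‖∫ t in c..d, cexp (I * ρ * (d - t)) * (f t - g t)‖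
          + ‖∫ t in c..d, cexp (I * ρ * (d - t)) * g t‖ := hsplit ▸ norm_add_le _ _
    _ ≤ Real.exp (|ρ.im| * (d - c)) * (ε / 2) + ε / 2 * Real.exp (|ρ.im| * (d - c)) := by
        gcongr
        · exact (norm_integral_cexp_I_mul_sub_mul_le ρ hcd.le hfg_int).trans (by gcongr)
        · exact hRg ρ hρ
    _ = ε * Real.exp (|ρ.im| * (d - c)) := by ring
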